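/- Let d ≥ 1, let L : ℝ^d × ℝ^d → ℝ be a C³ Tonelli Lagrangian, let T > 0, let u₀ : ℝ^d → ℝ and let u : [0,T] × ℝ^d → ℝ be its (finite-valued) Lax–Oleinik evolution. Let ρ₀ be a probability density on ℝ^d, and let σ : [0,T] × ℝ^d → ℝ^d be such that σ(0,x) = x for every x, σ(t,·) is Borel measurable for every t, each curve σ(·,x) is in W^{1,1}([0,T]; ℝ^d), and each curve t ↦ σ(t,x) is (u,L)-calibrated. Then σ optimizes the Lagrangian optimal transport problem from ρ₀ to σ(T,·)#ρ₀: for every φ : [0,T] × ℝ^d → ℝ^d with φ(·,x) ∈ W^{1,1}([0,T]; ℝ^d) for every x, φ(t,·) Borel measurable for every t, φ(0,x) = x for every x, and φ(T,·)#ρ₀ = σ(T,·)#ρ₀, one has ∫_{ℝ^d} ∫_0^T L(σ(t,x), σ̇(t,x)) ρ₀(x) dt dx ≤ ∫_{ℝ^d} ∫_0^T L(φ(t,x), φ̇(t,x)) ρ₀(x) dt dx (where the left-hand side is assumed finite and the integrals of u₀ρ₀ and of u(T,·) against σ(T,·)#ρ₀ are assumed finite). -/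

import Mathlib

/-!
Calibration turns the cost of the curve `σ(·,x)` into `u(T, σ(T,x)) - u₀(x)`, while the
Lax–Oleinik bound makes the same expression, with `φ` in place of `σ`, a lower bound for the
cost of `φ(·,x)`. After integrating against `ρ₀`, the two `u(T,·)` terms coincide because
`σ(T,·)` and `φ(T,·)` push `ρ₀` forward to the same measure.
-/

open Filter Set Function MeasureTheory

noncomputable section

/-- Points and vectors in `ℝ^d`. -/
abbrev Vec (d : ℕ) := Fin d → ℝ

/-- The Euclidean norm on `ℝ^d`. -/
def eunorm (d : ℕ) (v : Vec d) : ℝ := Real.sqrt (∑ i, v i ^ 2)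

/-- Partial gradient of `L : ℝ^d × ℝ^d → ℝ` in the position variable. -/
def gradx (d : ℕ) (L : Vec d × Vec d → ℝ) (x v : Vec d) : Vec d :=
  fun i => fderiv ℝ (fun y => L (y, v)) x (Pi.single i 1)

/-- Partial gradient of `L` in the velocity variable. -/
def gradv (d : ℕ) (L : Vec d × Vec d → ℝ) (x v : Vec d) : Vec d :=
  fun i => fderiv ℝ (fun w => L (x, w)) v (Pi.single i 1)

/-- Velocity Hessian `∇²_{vv} L`; entry `(i,j)` is `∂²L/∂v_j ∂v_i`. -/
def Hvv (d : ℕ) (L : Vec d × Vec d → ℝ) (x v : Vec d) : Matrix (Fin d) (Fin d) ℝ :=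
  Matrix.of fun i j => fderiv ℝ (fun w => gradv d L x w i) v (Pi.single j 1)

/-- Mixed Hessian `∇²_{vx} L`; entry `(i,j)` is `∂²L/∂v_i ∂x_j`. -/
def Hvx (d : ℕ) (L : Vec d × Vec d → ℝ) (x v : Vec d) : Matrix (Fin d) (Fin d) ℝ :=
  Matrix.of fun i j => fderiv ℝ (fun y => gradv d L y v i) x (Pi.single j 1)

/-- Mixed Hessian `∇²_{xv} L`; entry `(i,j)` is `∂²L/∂x_i ∂v_j`. -/
def Hxv (d : ℕ) (L : Vec d × Vec d → ℝ) (x v : Vec d) : Matrix (Fin d) (Fin d) ℝ :=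
  Matrix.of fun i j => fderiv ℝ (fun w => gradx d L x w i) v (Pi.single j 1)

/-- Position Hessian `∇²_{xx} L`; entry `(i,j)` is `∂²L/∂x_j ∂x_i`. -/
def Hxx (d : ℕ) (L : Vec d × Vec d → ℝ) (x v : Vec d) : Matrix (Fin d) (Fin d) ℝ :=
  Matrix.of fun i j => fderiv ℝ (fun y => gradx d L y v i) x (Pi.single j 1)

/-- Third derivative `∂³L/∂v_m ∂v_j ∂v_k`. -/
def Lvvv (d : ℕ) (L : Vec d × Vec d → ℝ) (m j k : Fin d) (x v : Vec d) : ℝ :=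
  fderiv ℝ (fun w => Hvv d L x w j k) v (Pi.single m 1)

/-- Third derivative `∂³L/∂x_k ∂v_j ∂v_l`. -/
def Lxvv (d : ℕ) (L : Vec d × Vec d → ℝ) (k j l : Fin d) (x v : Vec d) : ℝ :=
  fderiv ℝ (fun y => Hvv d L y v j l) x (Pi.single k 1)

/-- `IsTonelli d n L`: `L` is a Tonelli Lagrangian of class `Cⁿ`: it is `Cⁿ`-smooth,
strictly convex in the velocity variable, and has superlinear growth in the velocity. -/
structure IsTonelli (d n : ℕ) (L : Vec d × Vec d → ℝ) : Prop where
  smooth : ContDiff ℝ n L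
  strictConvex : ∀ x : Vec d, StrictConvexOn ℝ Set.univ fun v => L (x, v)
  superlinear : ∃ (c₀ : ℝ) (θ : Vec d → ℝ), (∀ v, 0 ≤ θ v) ∧
    (∀ C : ℝ, ∃ R : ℝ, ∀ v : Vec d, R ≤ eunorm d v → C * eunorm d v ≤ θ v) ∧
    ∀ x v : Vec d, c₀ + θ v ≤ L (x, v)

/-- The Euler–Lagrange equation `d/dt (∇_v L(γ, γ̇)) = ∇_x L(γ, γ̇)` at time `t`. -/
def EulerLagrangeAt (d : ℕ) (L : Vec d × Vec d → ℝ) (γ : ℝ → Vec d) (t : ℝ) : Prop :=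
  HasDerivAt (fun s => gradv d L (γ s) (deriv γ s)) (gradx d L (γ t) (deriv γ t)) t

/-- `γflow x v` is the unique solution of the Euler–Lagrange equation with initial
position `x` and initial velocity `v`. -/
structure IsELFlow (d : ℕ) (L : Vec d × Vec d → ℝ)
    (γflow : Vec d → Vec d → ℝ → Vec d) : Prop where
  init : ∀ x v : Vec d, γflow x v 0 = x
  vel : ∀ x v : Vec d, deriv (γflow x v) 0 = v
  el : ∀ x v : Vec d, ∀ᶠ t in nhds (0 : ℝ), EulerLagrangeAt d L (γflow x v) t
  uniq : ∀ x v : Vec d, ∀ γ : ℝ → Vec d, γ 0 = x → deriv γ 0 = v →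
    (∀ᶠ t in nhds (0 : ℝ), EulerLagrangeAt d L γ t) →
    ∀ᶠ t in nhds (0 : ℝ), γ t = γflow x v t

/-- The matrix `A(x,v)` of Lemma `jacobi`. -/
def matA (d : ℕ) (L : Vec d × Vec d → ℝ) (γflow : Vec d → Vec d → ℝ → Vec d)
    (x v : Vec d) : Matrix (Fin d) (Fin d) ℝ :=
  (Hvv d L x v)⁻¹ *
    ((Matrix.of fun i j =>
        deriv (fun t => Hvv d L (γflow x v t) (deriv (γflow x v) t) i j) 0)
      + Hvx d L x v - Hxv d L x v)

/-- The matrix `B(x,v)` of Lemma `jacobi`. -/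
def matB (d : ℕ) (L : Vec d × Vec d → ℝ) (γflow : Vec d → Vec d → ℝ → Vec d)
    (x v : Vec d) : Matrix (Fin d) (Fin d) ℝ :=
  (Hvv d L x v)⁻¹ *
    ((Matrix.of fun i j =>
        deriv (fun t => Hvx d L (γflow x v t) (deriv (γflow x v) t) i j) 0)
      - Hxx d L x v)

/-- The Jacobian matrix of a vector field; entry `(i,j)` is `∂f_i/∂x_j`. -/
def jac (d : ℕ) (f : Vec d → Vec d) (x : Vec d) : Matrix (Fin d) (Fin d) ℝ :=
  Matrix.of fun i j => fderiv ℝ (fun y => f y i) x (Pi.single j 1)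

/-- Divergence of a vector field. -/
def diverg (d : ℕ) (f : Vec d → Vec d) (x : Vec d) : ℝ :=
  ∑ i, fderiv ℝ (fun y => f y i) x (Pi.single i 1)

/-- The generalized curvature `𝒦_x(ξ) = tr(∇ξ(x)² + A(x,ξ(x))∇ξ(x) + B(x,ξ(x)))`. -/
def curvK (d : ℕ) (L : Vec d × Vec d → ℝ) (γflow : Vec d → Vec d → ℝ → Vec d)
    (ξ : Vec d → Vec d) (x : Vec d) : ℝ :=
  Matrix.trace
    (jac d ξ x * jac d ξ x + matA d L γflow x (ξ x) * jac d ξ x + matB d L γflow x (ξ x))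

/-- The operator `Γ_L` (explicit formula). -/
def GammaL (d : ℕ) (L : Vec d × Vec d → ℝ) (ξ : Vec d → Vec d) (x : Vec d) : Vec d :=
  (Hvv d L x (ξ x))⁻¹.mulVec (gradx d L x (ξ x) - (Hvx d L x (ξ x)).mulVec (ξ x))
    - (jac d ξ x).mulVec (ξ x)

/-- `γ` is a `W^{1,1}` curve on `[a,b]` with (a.e.) derivative `g`. -/
def IsAC (d : ℕ) (γ g : ℝ → Vec d) (a b : ℝ) : Prop :=
  IntervalIntegrable g volume a b ∧ ∀ t ∈ Icc a b, γ t = γ a + ∫ s in a..t, g s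

/-- The Lax–Oleinik evolution of `u₀`. -/
def laxOleinik (d : ℕ) (L : Vec d × Vec d → ℝ) (u₀ : Vec d → EReal) (t : ℝ) (x : Vec d) :
    EReal :=
  ⨅ p : {q : (ℝ → Vec d) × (ℝ → Vec d) //
      IsAC d q.1 q.2 0 t ∧ q.1 t = x ∧
      IntervalIntegrable (fun s => L (q.1 s, q.2 s)) volume 0 t},
    u₀ (p.1.1 0) + (((∫ s in (0 : ℝ)..t, L (p.1.1 s, p.1.2 s)) : ℝ) : EReal)

/-- The Hamiltonian `H(x,p) = sup_v (⟨p,v⟩ - L(x,v))`. -/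
def Ham (d : ℕ) (L : Vec d × Vec d → ℝ) (x p : Vec d) : ℝ :=
  sSup {r : ℝ | ∃ v : Vec d, r = (∑ i, p i * v i) - L (x, v)}

/-- The gradient `∇_p H` of the Hamiltonian in the momentum variable. -/
def gradpH (d : ℕ) (L : Vec d × Vec d → ℝ) (x p : Vec d) : Vec d :=
  fun i => fderiv ℝ (Ham d L x) p (Pi.single i 1)

/-- Position flow map induced by a Lagrangian flow `Φ` and an initial velocity field `V₀`. -/
def flowMap (d : ℕ) (Φ : ℝ → Vec d → Vec d → Vec d × Vec d) (V₀ : Vec d → Vec d)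
    (t : ℝ) (x : Vec d) : Vec d := (Φ t x (V₀ x)).1

/-- The time-dependent vector field `V(t,y) = σ̇(t, σ(t,·)⁻¹(y))`. -/
def flowField (d : ℕ) (Φ : ℝ → Vec d → Vec d → Vec d × Vec d) (V₀ : Vec d → Vec d)
    (t : ℝ) (y : Vec d) : Vec d :=
  deriv (fun s => flowMap d Φ V₀ s (invFun (flowMap d Φ V₀ t) y)) t

/-- Spatial gradient of (the real part of) the Lax–Oleinik evolution of `u₀`. -/
def loGrad (d : ℕ) (L : Vec d × Vec d → ℝ) (u₀ : Vec d → ℝ) (t : ℝ) (x : Vec d) : Vec d :=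
  fun i =>
    fderiv ℝ (fun y => (laxOleinik d L (fun z => ((u₀ z : ℝ) : EReal)) t y).toReal) x
      (Pi.single i 1)

/-- The vector field `V(t,x) = ∇_p H(x, ∇u(t,x))` built from the Lax–Oleinik evolution. -/
def loField (d : ℕ) (L : Vec d × Vec d → ℝ) (u₀ : Vec d → ℝ) (t : ℝ) (x : Vec d) : Vec d :=
  gradpH d L x (loGrad d L u₀ t x)

namespace MeasureTheory

variable {α β : Type*} [MeasurableSpace α] [MeasurableSpace β] {μ : Measure α} {σ φ : α → β}

theorem integral_comp_eq_of_map_eq (hσ : AEMeasurable σ μ) (hφ : AEMeasurable φ μ)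
    (hmap : μ.map φ = μ.map σ) {f : β → ℝ} (hf : AEStronglyMeasurable f (μ.map σ)) :
    ∫ x, f (φ x) ∂μ = ∫ x, f (σ x) ∂μ := by
  rw [← integral_map hσ hf, ← integral_map hφ (hmap ▸ hf), hmap]

theorem integrable_comp_of_map_eq (hφ : AEMeasurable φ μ)
    (hmap : μ.map φ = μ.map σ) {f : β → ℝ} (hf : Integrable f (μ.map σ)) :
    Integrable (fun x => f (φ x)) μ :=
  (integrable_map_measure (hmap ▸ hf.aestronglyMeasurable) hφ).mp (hmap ▸ hf)

theorem integral_le_of_calibrated (hσ : AEMeasurable σ μ) (hφ : AEMeasurable φ μ)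
    (hmap : μ.map φ = μ.map σ) {f : β → ℝ} {g cσ cφ : α → ℝ}
    (hf : Integrable f (μ.map σ)) (hg : Integrable g μ) (hcφ : Integrable cφ μ)
    (hcal : ∀ᵐ x ∂μ, cσ x = f (σ x) - g x) (hlb : ∀ᵐ x ∂μ, f (φ x) - g x ≤ cφ x) :
    ∫ x, cσ x ∂μ ≤ ∫ x, cφ x ∂μ := by
  have hfσ : Integrable (fun x => f (σ x)) μ := (integrable_map_measure hf.1 hσ).mp hf
  have hfφ := integrable_comp_of_map_eq hφ hmap hf
  calc ∫ x, cσ x ∂μ = ∫ x, f (σ x) ∂μ - ∫ x, g x ∂μ := by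
        rw [integral_congr_ae hcal, integral_sub hfσ hg]
    _ = ∫ x, f (φ x) - g x ∂μ := by
        rw [integral_sub hfφ hg, integral_comp_eq_of_map_eq hσ hφ hmap hf.1]
    _ ≤ ∫ x, cφ x ∂μ := integral_mono_ae (hfφ.sub hg) hcφ hlb

end MeasureTheory

theorem calibrated_curves_optimize_general
    (d : ℕ) (L : Vec d × Vec d → ℝ)
    (T : ℝ) (hT : 0 < T)
    (u₀ : Vec d → ℝ) (u : ℝ → Vec d → ℝ)
    (hu0 : ∀ x : Vec d, u 0 x = u₀ x)
    -- `u` is the Lax–Oleinik evolution of `u₀`: it is a lower bound of the cost of every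
    -- admissible curve, and it is the greatest such lower bound.
    (hu_lb : ∀ t ∈ Icc (0 : ℝ) T, ∀ x : Vec d, ∀ γ g : ℝ → Vec d,
      IsAC d γ g 0 t → γ t = x →
      IntervalIntegrable (fun s => L (γ s, g s)) volume 0 t →
      u t x ≤ u₀ (γ 0) + ∫ s in (0 : ℝ)..t, L (γ s, g s))
    (ρ₀ : Vec d → ℝ)
    (σ gσ : ℝ → Vec d → Vec d)
    (hσ0 : ∀ x : Vec d, σ 0 x = x)
    (hσmeas : ∀ t ∈ Icc (0 : ℝ) T, Measurable (σ t))
    -- each curve `σ(·,x)` is `(u,L)`-calibrated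
    (hσcal : ∀ x : Vec d,
      u T (σ T x) - u 0 (σ 0 x) = ∫ t in (0 : ℝ)..T, L (σ t x, gσ t x))
    -- finiteness assumptions
    (hu₀int : Integrable (fun x => u₀ x)
      ((volume : Measure (Vec d)).withDensity fun x => ENNReal.ofReal (ρ₀ x)))
    (huTint : Integrable (u T)
      (Measure.map (σ T)
        ((volume : Measure (Vec d)).withDensity fun x => ENNReal.ofReal (ρ₀ x)))) :
    ∀ φ gφ : ℝ → Vec d → Vec d,
      (∀ x : Vec d, φ 0 x = x) →
      (∀ t ∈ Icc (0 : ℝ) T, Measurable (φ t)) →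
      (∀ x : Vec d, IsAC d (fun t => φ t x) (fun t => gφ t x) 0 T) →
      (∀ x : Vec d, IntervalIntegrable (fun t => L (φ t x, gφ t x)) volume 0 T) →
      Measure.map (φ T)
          ((volume : Measure (Vec d)).withDensity fun x => ENNReal.ofReal (ρ₀ x)) =
        Measure.map (σ T)
          ((volume : Measure (Vec d)).withDensity fun x => ENNReal.ofReal (ρ₀ x)) →
      Integrable (fun x => ∫ t in (0 : ℝ)..T, L (φ t x, gφ t x))
        ((volume : Measure (Vec d)).withDensity fun x => ENNReal.ofReal (ρ₀ x)) →
      (∫ x : Vec d, (∫ t in (0 : ℝ)..T, L (σ t x, gσ t x))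
          ∂((volume : Measure (Vec d)).withDensity fun x => ENNReal.ofReal (ρ₀ x)))
        ≤ ∫ x : Vec d, (∫ t in (0 : ℝ)..T, L (φ t x, gφ t x))
          ∂((volume : Measure (Vec d)).withDensity fun x => ENNReal.ofReal (ρ₀ x)) := by
  intro φ gφ hφ0 hφmeas hφAC hφint hmap hφcost
  have hT_mem : T ∈ Icc (0 : ℝ) T := ⟨hT.le, le_rfl⟩
  refine integral_le_of_calibrated (hσmeas T hT_mem).aemeasurable
    (hφmeas T hT_mem).aemeasurable hmap huTint hu₀int hφcost
    (ae_of_all _ fun x => ?_) (ae_of_all _ fun x => ?_)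
  · rw [← hσcal x, hσ0 x, hu0 x]
  · have hφ_lb := hu_lb T hT_mem (φ T x) (fun t => φ t x) (fun t => gφ t x) (hφAC x) rfl
      (hφint x)
    rw [hφ0 x] at hφ_lb
    linarith

/-- if each curve `t ↦ σ(t,x)` is `(u,L)`-calibrated for the (finite-valued)
Lax–Oleinik evolution `u` of `u₀`, then `σ` optimizes the Lagrangian optimal transport problem
from `ρ₀` to `σ(T,·)#ρ₀`.  The measure `ρ₀ dx` is encoded as `volume.withDensity (ofReal ∘ ρ₀)`,
and the `W^{1,1}` curves are encoded by `IsAC` together with their (a.e.) derivatives. -/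
theorem calibrated_curves_optimize
    (d : ℕ) (hd : 1 ≤ d) (L : Vec d × Vec d → ℝ)
    (hL : IsTonelli d 3 L)
    (T : ℝ) (hT : 0 < T)
    (u₀ : Vec d → ℝ) (u : ℝ → Vec d → ℝ)
    (hu0 : ∀ x : Vec d, u 0 x = u₀ x)
    -- `u` is the Lax–Oleinik evolution of `u₀`: it is a lower bound of the cost of every
    -- admissible curve, and it is the greatest such lower bound.
    (hu_lb : ∀ t ∈ Icc (0 : ℝ) T, ∀ x : Vec d, ∀ γ g : ℝ → Vec d,
      IsAC d γ g 0 t → γ t = x →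
      IntervalIntegrable (fun s => L (γ s, g s)) volume 0 t →
      u t x ≤ u₀ (γ 0) + ∫ s in (0 : ℝ)..t, L (γ s, g s))
    (hu_glb : ∀ t ∈ Icc (0 : ℝ) T, ∀ x : Vec d, ∀ c : ℝ,
      (∀ γ g : ℝ → Vec d, IsAC d γ g 0 t → γ t = x →
        IntervalIntegrable (fun s => L (γ s, g s)) volume 0 t →
        c ≤ u₀ (γ 0) + ∫ s in (0 : ℝ)..t, L (γ s, g s)) →
      c ≤ u t x)
    (ρ₀ : Vec d → ℝ) (hρ₀meas : Measurable ρ₀) (hρ₀nn : ∀ x, 0 ≤ ρ₀ x)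
    (hρ₀mass : (∫ x : Vec d, ρ₀ x) = 1)
    (σ gσ : ℝ → Vec d → Vec d)
    (hσ0 : ∀ x : Vec d, σ 0 x = x)
    (hσmeas : ∀ t ∈ Icc (0 : ℝ) T, Measurable (σ t))
    (hσAC : ∀ x : Vec d, IsAC d (fun t => σ t x) (fun t => gσ t x) 0 T)
    (hσactint : ∀ x : Vec d, IntervalIntegrable (fun t => L (σ t x, gσ t x)) volume 0 T)
    -- each curve `σ(·,x)` is `(u,L)`-calibrated
    (hσcal : ∀ x : Vec d,
      u T (σ T x) - u 0 (σ 0 x) = ∫ t in (0 : ℝ)..T, L (σ t x, gσ t x))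
    (huTmeas : Measurable (u T))
    -- finiteness assumptions
    (hu₀int : Integrable (fun x => u₀ x)
      ((volume : Measure (Vec d)).withDensity fun x => ENNReal.ofReal (ρ₀ x)))
    (huTint : Integrable (u T)
      (Measure.map (σ T)
        ((volume : Measure (Vec d)).withDensity fun x => ENNReal.ofReal (ρ₀ x))))
    (hσcost : Integrable (fun x => ∫ t in (0 : ℝ)..T, L (σ t x, gσ t x))
      ((volume : Measure (Vec d)).withDensity fun x => ENNReal.ofReal (ρ₀ x))) :
    ∀ φ gφ : ℝ → Vec d → Vec d,
      (∀ x : Vec d, φ 0 x = x) →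
      (∀ t ∈ Icc (0 : ℝ) T, Measurable (φ t)) →
      (∀ x : Vec d, IsAC d (fun t => φ t x) (fun t => gφ t x) 0 T) →
      (∀ x : Vec d, IntervalIntegrable (fun t => L (φ t x, gφ t x)) volume 0 T) →
      Measure.map (φ T)
          ((volume : Measure (Vec d)).withDensity fun x => ENNReal.ofReal (ρ₀ x)) =
        Measure.map (σ T)
          ((volume : Measure (Vec d)).withDensity fun x => ENNReal.ofReal (ρ₀ x)) →
      Integrable (fun x => ∫ t in (0 : ℝ)..T, L (φ t x, gφ t x))
        ((volume : Measure (Vec d)).withDensity fun x => ENNReal.ofReal (ρ₀ x)) →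
      (∫ x : Vec d, (∫ t in (0 : ℝ)..T, L (σ t x, gσ t x))
          ∂((volume : Measure (Vec d)).withDensity fun x => ENNReal.ofReal (ρ₀ x)))
        ≤ ∫ x : Vec d, (∫ t in (0 : ℝ)..T, L (φ t x, gφ t x))
          ∂((volume : Measure (Vec d)).withDensity fun x => ENNReal.ofReal (ρ₀ x)) :=
  calibrated_curves_optimize_general d L T hT u₀ u hu0 hu_lb ρ₀ σ gσ hσ0 hσmeas hσcal hu₀int huTint
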